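/- arXiv:0902.2472 — 2 statements merged into one kernel-verified Lean document; each statement's English description precedes it below -/
import Mathlib

section
/- Convex Lipschitz functions on $\mathbb{R}^d$ form a convergence-determining class for probability measures on $\mathbb{R}^d$ with respect to which such functions are integrable: if $(\mu_n)$ and $\mu$ are probability measures on $\mathbb{R}^d$ such that every convex Lipschitz function $h : \mathbb{R}^d \to \mathbb{R}$ is integrable with respect to each $\mu_n$ and with respect to $\mu$, and $\int h\, d\mu_n \to \int h\, d\mu$ for every convex Lipschitz $h$, then $\mu_n$ converges weakly to $\mu$. -/
/-!
By the portmanteau theorem it suffices to show `μ G ≤ liminf μₙ G` for open `G`, and by inner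
regularity `μ K ≤ liminf μₙ G` for compact `K ⊆ G`. Covering `K` by finitely many small balls,
the maximum of the tents `min 1 (max 0 (2 - dist x z / r))` at their centres lies between the
indicators of `K` and `G`. Each tent is the difference `(1 + (t - 2)⁺) - (t - 1)⁺` of convex
Lipschitz functions of `t = dist x z / r`, and differences of convex Lipschitz functions are
closed under `max`, so the integrals of this maximum converge.
-/

open MeasureTheory Filter Metric Set
open scoped BoundedContinuousFunction

section ConvexLipschitz

variable {E : Type*} [NormedAddCommGroup E] [NormedSpace ℝ E]

def IsConvexLipschitz (f : E → ℝ) : Prop :=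
  ConvexOn ℝ univ f ∧ ∃ L : NNReal, LipschitzWith L f

lemma isConvexLipschitz_const (c : ℝ) : IsConvexLipschitz fun _ : E => c :=
  ⟨convexOn_const c convex_univ, 0, LipschitzWith.const c⟩

lemma isConvexLipschitz_dist (z : E) : IsConvexLipschitz fun x => dist x z :=
  ⟨convexOn_dist z convex_univ, 1, LipschitzWith.dist_left z⟩

namespace IsConvexLipschitz

variable {f g : E → ℝ}

lemma add (hf : IsConvexLipschitz f) (hg : IsConvexLipschitz g) :
    IsConvexLipschitz fun x => f x + g x :=
  let ⟨hfc, _, hfl⟩ := hf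
  let ⟨hgc, _, hgl⟩ := hg
  ⟨hfc.add hgc, _, hfl.add hgl⟩

lemma sup (hf : IsConvexLipschitz f) (hg : IsConvexLipschitz g) :
    IsConvexLipschitz fun x => max (f x) (g x) :=
  let ⟨hfc, _, hfl⟩ := hf
  let ⟨hgc, _, hgl⟩ := hg
  ⟨hfc.sup hgc, _, hfl.max hgl⟩

lemma const_mul (hf : IsConvexLipschitz f) {c : ℝ} (hc : 0 ≤ c) :
    IsConvexLipschitz fun x => c * f x :=
  let ⟨hfc, _, hfl⟩ := hf
  ⟨hfc.smul hc, _, (lipschitzWith_smul c).comp hfl⟩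

end IsConvexLipschitz

def IsDiffOfConvexLipschitz (f : E → ℝ) : Prop :=
  ∃ g h : E → ℝ, IsConvexLipschitz g ∧ IsConvexLipschitz h ∧ f = g - h

lemma isDiffOfConvexLipschitz_zero : IsDiffOfConvexLipschitz (0 : E → ℝ) :=
  ⟨0, 0, isConvexLipschitz_const 0, isConvexLipschitz_const 0, (sub_zero 0).symm⟩

/-- `max (a - b) (c - d) = max (a + d) (c + b) - (b + d)`. -/
lemma IsDiffOfConvexLipschitz.sup {f g : E → ℝ} (hf : IsDiffOfConvexLipschitz f)
    (hg : IsDiffOfConvexLipschitz g) : IsDiffOfConvexLipschitz (f ⊔ g) := by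
  obtain ⟨a, b, ha, hb, rfl⟩ := hf
  obtain ⟨c, d, hc, hd, rfl⟩ := hg
  refine ⟨fun x => max (a x + d x) (c x + b x), fun x => b x + d x,
    (ha.add hd).sup (hc.add hb), hb.add hd, funext fun x => ?_⟩
  simp only [Pi.sup_apply, Pi.sub_apply, ← max_sub_sub_right]
  congr 1 <;> ring

lemma IsDiffOfConvexLipschitz.finset_sup' {ι : Type*} {t : Finset ι} (ht : t.Nonempty)
    {f : ι → E → ℝ} (hf : ∀ i ∈ t, IsDiffOfConvexLipschitz (f i)) :
    IsDiffOfConvexLipschitz (t.sup' ht f) :=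
  Finset.sup'_induction ht f (fun _ h₁ _ h₂ => h₁.sup h₂) hf

end ConvexLipschitz

section Tent

variable {X : Type*} [PseudoMetricSpace X]

noncomputable def tent (z : X) (r : ℝ) (x : X) : ℝ :=
  min 1 (max 0 (2 - dist x z / r))

lemma min_one_max_zero_two_sub (t : ℝ) :
    min 1 (max 0 (2 - t)) = (1 + max (t - 2) 0) - max (t - 1) 0 := by
  simp only [min_def, max_def]
  split_ifs <;> linarith

lemma tent_nonneg (z : X) (r : ℝ) (x : X) : 0 ≤ tent z r x :=
  le_min zero_le_one (le_max_left _ _)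

lemma indicator_ball_le_tent (z : X) {r : ℝ} (hr : 0 < r) :
    (ball z r).indicator 1 ≤ tent z r := fun x => by
  refine indicator_apply_le' (fun hx => ?_) fun _ => tent_nonneg z r x
  have : dist x z / r < 1 := (div_lt_one hr).2 (mem_ball.1 hx)
  simp only [tent, Pi.one_apply, le_min_iff, le_max_iff]
  exact ⟨le_rfl, Or.inr (by linarith)⟩

lemma tent_le_indicator_ball (z : X) {r : ℝ} (hr : 0 < r) :
    tent z r ≤ (ball z (2 * r)).indicator 1 := fun x => by
  refine le_indicator_apply (fun _ => min_le_left _ _) fun hx => ?_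
  have : 2 ≤ dist x z / r := (le_div_iff₀ hr).2 (not_lt.1 hx)
  exact (min_le_right _ _).trans (max_le le_rfl (by linarith))

lemma isDiffOfConvexLipschitz_tent {E : Type*} [NormedAddCommGroup E] [NormedSpace ℝ E]
    (z : E) {r : ℝ} (hr : 0 ≤ r) : IsDiffOfConvexLipschitz (tent z r) := by
  have hcone (c : ℝ) : IsConvexLipschitz fun x => max (dist x z / r - c) 0 := by
    simpa only [div_eq_inv_mul, sub_eq_add_neg] using
      (((isConvexLipschitz_dist z).const_mul (inv_nonneg.2 hr)).add
        (isConvexLipschitz_const (-c))).sup (isConvexLipschitz_const 0)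
  exact ⟨_, _, (isConvexLipschitz_const 1).add (hcone 2), hcone 1,
    funext fun x => min_one_max_zero_two_sub _⟩

end Tent

lemma exists_isDiffOfConvexLipschitz_indicator_le {E : Type*} [NormedAddCommGroup E]
    [NormedSpace ℝ E] {K G : Set E} (hK : IsCompact K) (hG : IsOpen G) (hKG : K ⊆ G) :
    ∃ F : E → ℝ, IsDiffOfConvexLipschitz F ∧ K.indicator 1 ≤ F ∧ F ≤ G.indicator 1 := by
  rcases K.eq_empty_or_nonempty with rfl | ⟨x₀, hx₀⟩
  · exact ⟨0, isDiffOfConvexLipschitz_zero, fun x => by simp,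
      indicator_nonneg fun _ _ => zero_le_one⟩
  obtain ⟨δ, hδ, hδG⟩ := hK.exists_thickening_subset_open hG hKG
  have hr : 0 < δ / 2 := half_pos hδ
  obtain ⟨t, htK, hKt⟩ := hK.elim_nhds_subcover (fun z => ball z (δ / 2))
    fun z _ => ball_mem_nhds z hr
  have ht : t.Nonempty := by
    obtain ⟨z, hz, -⟩ := mem_iUnion₂.1 (hKt hx₀)
    exact ⟨z, hz⟩
  refine ⟨t.sup' ht fun z => tent z (δ / 2),
    .finset_sup' ht fun z _ => isDiffOfConvexLipschitz_tent z hr.le, fun x => ?_, ?_⟩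
  · rw [Finset.sup'_apply]
    refine indicator_apply_le' (fun hx => ?_) fun _ =>
      Finset.le_sup'_of_le _ ht.choose_spec (tent_nonneg _ _ x)
    obtain ⟨z, hz, hxz⟩ := mem_iUnion₂.1 (hKt hx)
    refine Finset.le_sup'_of_le _ hz ?_
    simpa [indicator_of_mem hxz] using indicator_ball_le_tent z hr x
  · refine Finset.sup'_le _ _ fun z hz => (tent_le_indicator_ball z hr).trans ?_
    rw [mul_div_cancel₀ δ two_ne_zero]
    exact indicator_le_indicator_of_subset ((ball_subset_thickening (htK z hz) δ).trans hδG)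
      (fun _ => zero_le_one)

section Convergence

variable {Ω : Type*} [MeasurableSpace Ω]

def TendstoIntegral (μs : ℕ → Measure Ω) (μ : Measure Ω) (f : Ω → ℝ) : Prop :=
  (∀ n, Integrable f (μs n)) ∧ Integrable f μ ∧
    Tendsto (fun n => ∫ x, f x ∂(μs n)) atTop (nhds (∫ x, f x ∂μ))

variable {μs : ℕ → Measure Ω} {μ : Measure Ω}

lemma TendstoIntegral.sub {f g : Ω → ℝ} (hf : TendstoIntegral μs μ f)
    (hg : TendstoIntegral μs μ g) : TendstoIntegral μs μ (f - g) := by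
  obtain ⟨hfn, hf, hflim⟩ := hf
  obtain ⟨hgn, hg, hglim⟩ := hg
  refine ⟨fun n => (hfn n).sub (hgn n), hf.sub hg, ?_⟩
  simpa only [Pi.sub_apply, integral_sub (hfn _) (hgn _), integral_sub hf hg]
    using hflim.sub hglim

lemma measure_le_liminf_measure_of_indicator_le [∀ n, IsFiniteMeasure (μs n)]
    [IsFiniteMeasure μ] {K G : Set Ω} {F : Ω → ℝ} (hK : MeasurableSet K)
    (hG : MeasurableSet G) (hKF : K.indicator 1 ≤ F) (hFG : F ≤ G.indicator 1)
    (hF : TendstoIntegral μs μ F) : μ K ≤ atTop.liminf fun n => μs n G := by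
  obtain ⟨hFn, hFμ, hlim⟩ := hF
  have hμK : μ.real K ≤ ∫ x, F x ∂μ := by
    rw [← integral_indicator_one hK]
    exact integral_mono ((integrable_const 1).indicator hK) hFμ hKF
  have hμG (n : ℕ) : ∫ x, F x ∂(μs n) ≤ (μs n).real G := by
    rw [← integral_indicator_one hG]
    exact integral_mono (hFn n) ((integrable_const 1).indicator hG) hFG
  calc μ K = ENNReal.ofReal (μ.real K) := (ofReal_measureReal (measure_ne_top μ K)).symm
    _ ≤ ENNReal.ofReal (∫ x, F x ∂μ) := ENNReal.ofReal_le_ofReal hμK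
    _ = atTop.liminf fun n => ENNReal.ofReal (∫ x, F x ∂(μs n)) :=
      ((ENNReal.continuous_ofReal.tendsto _).comp hlim).liminf_eq.symm
    _ ≤ atTop.liminf fun n => μs n G := liminf_le_liminf <| .of_forall fun n =>
      (ENNReal.ofReal_le_ofReal (hμG n)).trans_eq (ofReal_measureReal (measure_ne_top _ G))

end Convergence

theorem tendsto_integral_of_forall_isConvexLipschitz {E : Type*} [NormedAddCommGroup E]
    [NormedSpace ℝ E] [MeasurableSpace E] [BorelSpace E] {μs : ℕ → Measure E} {μ : Measure E}
    [∀ n, IsProbabilityMeasure (μs n)] [IsProbabilityMeasure μ] [μ.InnerRegularCompactLTTop]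
    (h : ∀ f, IsConvexLipschitz f → TendstoIntegral μs μ f) (f : E →ᵇ ℝ) :
    Tendsto (fun n => ∫ x, f x ∂(μs n)) atTop (nhds (∫ x, f x ∂μ)) := by
  have hopen (G : Set E) (hG : IsOpen G) : μ G ≤ atTop.liminf fun n => μs n G := by
    rw [hG.measurableSet.measure_eq_iSup_isCompact_of_ne_top (measure_ne_top μ G)]
    refine iSup₂_le fun K hKG => iSup_le fun hK => ?_
    obtain ⟨F, ⟨g, k, hg, hk, rfl⟩, hKF, hFG⟩ :=
      exists_isDiffOfConvexLipschitz_indicator_le hK hG hKG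
    exact measure_le_liminf_measure_of_indicator_le hK.measurableSet hG.measurableSet hKF hFG
      ((h g hg).sub (h k hk))
  have hweak := tendsto_of_forall_isOpen_le_liminf' (μ := ⟨μ, inferInstance⟩)
    (μs := fun n => ⟨μs n, inferInstance⟩) hopen
  exact ProbabilityMeasure.tendsto_iff_forall_integral_tendsto.1 hweak f

theorem convex_lipschitz_convergence_determining
    (d : ℕ) (μs : ℕ → Measure (EuclideanSpace ℝ (Fin d)))
    (μ : Measure (EuclideanSpace ℝ (Fin d)))
    [∀ n, IsProbabilityMeasure (μs n)] [IsProbabilityMeasure μ]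
    (h : ∀ h : EuclideanSpace ℝ (Fin d) → ℝ,
      ConvexOn ℝ Set.univ h → (∃ L : NNReal, LipschitzWith L h) →
        (∀ n, Integrable h (μs n)) ∧ Integrable h μ ∧
          Tendsto (fun n => ∫ x, h x ∂(μs n)) atTop (nhds (∫ x, h x ∂μ))) :
    ∀ f : EuclideanSpace ℝ (Fin d) →ᵇ ℝ,
      Tendsto (fun n => ∫ x, f x ∂(μs n)) atTop (nhds (∫ x, f x ∂μ)) :=
  tendsto_integral_of_forall_isConvexLipschitz fun f hf => h f hf.1 hf.2
end

section
/- Let $X_0, \dots, X_{n-1}$ be independent random variables with $\mathbb{P}[X_j = -1] = \mathbb{P}[X_j = 1] = 1/2$, and let $\mathcal{C}_n$ be the circulant matrix with first row $X_0, \dots, X_{n-1}$. If $n \ge 3$ is odd, then $\mathbb{P}[\mathcal{C}_n \text{ is singular}] \le \min\left\{ c_3\,\frac{d(n)}{n},\ \sum_{\substack{1 < m \le n \\ m \mid n}} 2^{-\varphi(m)} \right\}$, where $c_3 > 0$ is an absolute constant, $d(n)$ is the number of positive divisors of $n$, and $\varphi$ is Euler's totient function. -/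
/-!
For a primitive `n`-th root of unity `ζ`, the circulant matrix with first row `v` has determinant
`∏ₖ Q_v(ζᵏ)`, where `Q_v = ∑ⱼ vⱼ Xʲ`. So if the sign matrix is singular, the cyclotomic polynomial
`Φ_m` of the order `m ∣ n` of some `ζᵏ` divides `Q_v` in `ℤ[X]`, and `m ≠ 1` because an odd number
of signs cannot sum to `0`.

Write `n = N m`. Modulo `X^m - 1`, a multiple of `Φ_m`, `Q_v ≡ ∑_{t<m} S_t Xᵗ`, where `S_t` is the
sum of the `N` signs `vⱼ` with `j ≡ t (mod m)`; as `deg Φ_m = φ(m)`, the sums `S_t` with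
`t ≥ φ(m)` determine the others. A row of `N` signs with prescribed sum can be chosen in at most
`C(N, ⌊N/2⌋)` ways, so `P[Φ_m ∣ Q_v] ≤ r^φ(m)` with `r = C(N, ⌊N/2⌋) / 2^N`. Finally `r ≤ 1/2`,
`r² N ≤ 1` and `m ≤ 2^φ(m)` bound `r^φ(m)` both by `2^(-φ(m))` and by `4/n`, and a union bound
over the divisors `m > 1` of `n` gives the theorem with `c₃ = 4`.
-/

open MeasureTheory ProbabilityTheory
open scoped ENNReal

open Finset Polynomial Matrix

theorem Matrix.det_circulant_eq_prod {K : Type*} [CommRing K] [IsDomain K] {n : ℕ} [NeZero n]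
    {ζ : K} (hζ : IsPrimitiveRoot ζ n) (v : Fin n → K) :
    (circulant v).det = ∏ k : Fin n, ∑ j : Fin n, v j * (ζ ^ (k : ℕ)) ^ (j : ℕ) := by
  set V : Matrix (Fin n) (Fin n) K := vandermonde fun k : Fin n => ζ ^ (k : ℕ)
  have hV : V.det ≠ 0 := det_vandermonde_ne_zero_iff.mpr fun a b hab =>
    Fin.ext (hζ.pow_inj a.isLt b.isLt hab)
  have hpow : ∀ a b : ℕ, a ≡ b [MOD n] → ζ ^ a = ζ ^ b := fun a b h =>
    pow_eq_pow_of_modEq h hζ.pow_eq_one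
  -- the columns of `V` are eigenvectors of `(circulant v)ᵀ`
  have hdiag : (circulant v)ᵀ * V =
      V * diagonal fun k : Fin n => ∑ j : Fin n, v j * (ζ ^ (k : ℕ)) ^ (j : ℕ) := by
    ext i k
    rw [mul_diagonal, mul_apply, Finset.mul_sum, ← Equiv.sum_comp (Equiv.addLeft i)]
    refine Finset.sum_congr rfl fun j _ => ?_
    simp only [transpose_apply, circulant_apply, Equiv.coe_addLeft, add_sub_cancel_left,
      V, vandermonde_apply, ← pow_mul]
    rw [mul_left_comm, ← pow_add]
    refine congrArg _ (hpow _ _ ?_)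
    rw [Fin.val_add]
    convert (Nat.mod_modEq _ n).mul_right (k : ℕ) using 1
    ring
  have := congrArg det hdiag
  rw [det_mul, det_mul, det_transpose, det_diagonal, mul_comm] at this
  exact mul_left_cancel₀ hV this

theorem Polynomial.aeval_ofFn {R A : Type*} [CommSemiring R] [DecidableEq R] [Semiring A]
    [Algebra R A] {n : ℕ} (v : Fin n → R) (x : A) :
    aeval x (ofFn n v) = ∑ j : Fin n, algebraMap R A (v j) * x ^ (j : ℕ) := by
  simp [ofFn_eq_sum_monomial, aeval_monomial]

theorem exists_cyclotomic_dvd_of_det_circulant_eq_zero {n : ℕ} [NeZero n] {v : Fin n → ℤ}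
    (h : (circulant v).det = 0) : ∃ m ∈ n.divisors, cyclotomic m ℤ ∣ ofFn n v := by
  obtain ⟨ζ, hζ⟩ : ∃ ζ : ℂ, IsPrimitiveRoot ζ n :=
    ⟨_, Complex.isPrimitiveRoot_exp n (NeZero.ne n)⟩
  have hdet : (circulant fun j => (v j : ℂ)).det = 0 := by
    simpa [h, map_circulant] using ((Int.castRingHom ℂ).map_det (circulant v)).symm
  rw [det_circulant_eq_prod hζ, prod_eq_zero_iff] at hdet
  obtain ⟨k, -, hk⟩ := hdet
  set μ := ζ ^ (k : ℕ)
  have hμ : μ ^ n = 1 := by rw [pow_right_comm, hζ.pow_eq_one, one_pow]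
  have hpos : 0 < orderOf μ := orderOf_pos_iff.mpr (isOfFinOrder_iff_pow_eq_one.mpr
    ⟨n, Nat.pos_of_neZero n, hμ⟩)
  refine ⟨orderOf μ, Nat.mem_divisors.mpr ⟨orderOf_dvd_of_pow_eq_one hμ, NeZero.ne n⟩, ?_⟩
  rw [cyclotomic_eq_minpoly (IsPrimitiveRoot.orderOf μ) hpos]
  exact minpoly.isIntegrallyClosed_dvd ((IsPrimitiveRoot.orderOf μ).isIntegral hpos)
    (by simpa [aeval_ofFn] using hk)

theorem Polynomial.eq_of_cyclotomic_dvd_of_coeff_eq {R : Type*} [CommRing R] [IsDomain R]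
    {m : ℕ} {p q : R[X]} (hp : cyclotomic m R ∣ p) (hq : cyclotomic m R ∣ q)
    (h : ∀ i, m.totient ≤ i → p.coeff i = q.coeff i) : p = q := by
  refine sub_eq_zero.mp (eq_zero_of_dvd_of_degree_lt (dvd_sub hp hq) ?_)
  rw [degree_cyclotomic, degree_lt_iff_coeff_zero]
  intro i hi
  rw [coeff_sub, h i hi, sub_self]

theorem Polynomial.X_pow_sub_one_dvd_ofFn_sub_ofFn_sum {R : Type*} [CommRing R] [DecidableEq R]
    {N m : ℕ} (x : Fin (N * m) → R) :
    X ^ m - 1 ∣ ofFn (N * m) x - ofFn m fun t => ∑ i : Fin N, x (finProdFinEquiv (i, t)) := by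
  rw [ofFn_eq_sum_monomial, ofFn_eq_sum_monomial, ← finProdFinEquiv.sum_comp,
    Fintype.sum_prod_type, sum_comm, ← sum_sub_distrib]
  refine dvd_sum fun t _ => ?_
  rw [map_sum, ← sum_sub_distrib]
  refine dvd_sum fun i _ => ?_
  have h := sub_dvd_pow_sub_pow (X ^ m : R[X]) 1 i
  rw [one_pow] at h
  rw [finProdFinEquiv_apply_val, ← C_mul_X_pow_eq_monomial, ← C_mul_X_pow_eq_monomial, pow_add,
    pow_mul]
  convert dvd_mul_of_dvd_right h (C (x (finProdFinEquiv (i, t))) * X ^ (t : ℕ)) using 1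
  ring

theorem Finset.card_le_pow_mul_pow_of_determined {ι α β : Type*} [Fintype ι] [DecidableEq ι]
    [Fintype α] [DecidableEq α] [DecidableEq β] {S : Finset (ι → α)} (J : Finset ι) (f : α → β)
    {c : ℕ} (hc : ∀ y, #{a | f a = y} ≤ c)
    (hS : ∀ g ∈ S, ∀ g' ∈ S, (∀ t ∉ J, g t = g' t) → ∀ t ∈ J, f (g t) = f (g' t)) :
    #S ≤ c ^ #J * Fintype.card α ^ #Jᶜ := by
  let restrict : (ι → α) → ((Jᶜ : Finset ι) → α) := fun g t => g t
  suffices hfiber : ∀ h, #{g ∈ S | restrict g = h} ≤ c ^ #J by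
    calc #S ≤ c ^ #J * #(univ : Finset ((Jᶜ : Finset ι) → α)) :=
          card_le_mul_card_image_of_maps_to (fun _ _ => mem_univ _) _ fun h _ => hfiber h
      _ = c ^ #J * Fintype.card α ^ #Jᶜ := by rw [card_univ, Fintype.card_fun, Fintype.card_coe]
  intro h
  obtain he | ⟨g₀, hg₀⟩ := ({g ∈ S | restrict g = h}).eq_empty_or_nonempty
  · simp [he]
  rw [mem_filter] at hg₀
  let V : ι → Finset α := fun t => if t ∈ J then ({a | f a = f (g₀ t)} : Finset α) else {g₀ t}
  have hsub : {g ∈ S | restrict g = h} ⊆ Fintype.piFinset V := by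
    intro g hg
    rw [mem_filter] at hg
    have hcompl : ∀ t ∉ J, g t = g₀ t := fun t ht =>
      congrFun (hg.2.trans hg₀.2.symm) ⟨t, mem_compl.mpr ht⟩
    rw [Fintype.mem_piFinset]
    intro t
    by_cases ht : t ∈ J
    · simpa [V, ht] using hS g hg.1 g₀ hg₀.1 hcompl t ht
    · simpa [V, ht] using hcompl t ht
  calc #{g ∈ S | restrict g = h} ≤ ∏ t, #(V t) := Fintype.card_piFinset V ▸ card_le_card hsub
    _ ≤ ∏ t, if t ∈ J then c else 1 :=
        prod_le_prod' fun t _ => by by_cases ht : t ∈ J <;> simp [V, ht, hc]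
    _ = c ^ #J := by simp [prod_ite_mem]

def Bool.toSign : Bool → ℤ
  | true => 1
  | false => -1

theorem Bool.sum_toSign {ι : Type*} [Fintype ι] (s : ι → Bool) :
    ∑ i, (s i).toSign = 2 * #{i | s i} - Fintype.card ι := by
  have h : ∀ b : Bool, b.toSign = 2 * (if b then 1 else 0) - 1 := by decide
  simp only [h, sum_sub_distrib, ← mul_sum, sum_boole, sum_const, card_univ, nsmul_one]

theorem Bool.sum_toSign_ne_zero {ι : Type*} [Fintype ι] (hι : Odd (Fintype.card ι))
    (s : ι → Bool) : ∑ i, (s i).toSign ≠ 0 := by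
  rw [sum_toSign]
  obtain ⟨k, hk⟩ := hι
  omega

theorem card_sum_toSign_eq_le (N : ℕ) (v : ℤ) :
    #{s : Fin N → Bool | ∑ i, (s i).toSign = v} ≤ N.choose (N / 2) :=
  calc #{s : Fin N → Bool | ∑ i, (s i).toSign = v}
      ≤ #(powersetCard ((v + N) / 2).toNat (univ : Finset (Fin N))) := by
        refine card_le_card_of_injOn (fun s => ({i | s i} : Finset (Fin N))) (fun s hs => ?_)
          fun s _ s' _ hss' => ?_
        · simp only [coe_filter, mem_univ, true_and, Set.mem_ofPred_eq, Bool.sum_toSign,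
            Fintype.card_fin] at hs
          simp only [mem_coe, mem_powersetCard, subset_univ, true_and]
          omega
        · funext i
          have := congrArg (i ∈ ·) hss'
          simp only [mem_filter, mem_univ, true_and, eq_iff_iff] at this
          exact Bool.eq_iff_iff.mpr this
    _ ≤ N.choose (N / 2) := by
        rw [card_powersetCard, card_univ, Fintype.card_fin]
        exact Nat.choose_le_middle _ _

noncomputable def signPoly {n : ℕ} (b : Fin n → Bool) : ℤ[X] :=
  ofFn n fun j => (b j).toSign

theorem exists_cyclotomic_dvd_signPoly_of_det_eq_zero {n : ℕ} (hn : Odd n) {b : Fin n → Bool}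
    (h : (Matrix.of fun i j : Fin n => ((b (j - i)).toSign : ℝ)).det = 0) :
    ∃ m ∈ n.divisors, 1 < m ∧ cyclotomic m ℤ ∣ signPoly b := by
  have : NeZero n := ⟨hn.pos.ne'⟩
  have hR : (circulant fun j => ((b j).toSign : ℝ)).det = 0 := by rw [← det_transpose]; exact h
  have hZ : (circulant fun j => (b j).toSign).det = 0 := by
    have := (Int.castRingHom ℝ).map_det (circulant fun j => (b j).toSign)
    simp only [RingHom.mapMatrix_apply, map_circulant, eq_intCast, hR] at this
    exact_mod_cast this
  obtain ⟨m, hmn, hdvd⟩ := exists_cyclotomic_dvd_of_det_circulant_eq_zero hZ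
  refine ⟨m, hmn, lt_of_le_of_ne (Nat.pos_of_mem_divisors hmn) fun hm => ?_, hdvd⟩
  rw [← hm, cyclotomic_one, ← C_1, dvd_iff_isRoot, IsRoot.def] at hdvd
  exact Bool.sum_toSign_ne_zero (by simpa using hn) b
    (by simpa [signPoly, ofFn_eq_sum_monomial, eval_finsetSum] using hdvd)

theorem Nat.centralBinom_sq_mul_le (k : ℕ) : k.centralBinom ^ 2 * (2 * k + 1) ≤ 16 ^ k := by
  induction k with
  | zero => simp
  | succ k ih =>
    have hstep : 4 * (2 * k + 1) * (2 * k + 3) ≤ 16 * (k + 1) ^ 2 := by nlinarith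
    refine Nat.le_of_mul_le_mul_left ?_ (by positivity : 0 < (k + 1) ^ 2)
    calc (k + 1) ^ 2 * ((k + 1).centralBinom ^ 2 * (2 * (k + 1) + 1))
        = (k.centralBinom ^ 2 * (2 * k + 1)) * (4 * (2 * k + 1) * (2 * k + 3)) := by
          rw [← mul_assoc, ← mul_pow, succ_mul_centralBinom_succ]; ring
      _ ≤ 16 ^ k * (16 * (k + 1) ^ 2) := Nat.mul_le_mul ih hstep
      _ = (k + 1) ^ 2 * 16 ^ (k + 1) := by ring

theorem Nat.choose_half_sq_mul_le (N : ℕ) : N.choose (N / 2) ^ 2 * N ≤ 4 ^ N := by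
  obtain ⟨k, rfl | rfl⟩ := N.even_or_odd'
  · have h := centralBinom_sq_mul_le k
    rw [centralBinom] at h
    rw [show 2 * k / 2 = k by omega, pow_mul]
    norm_num
    nlinarith
  · -- the two middle entries of row `2k+1` add up to the central entry of row `2k+2`
    have hcb : (k + 1).centralBinom = 2 * (2 * k + 1).choose k := by
      rw [centralBinom, show 2 * (k + 1) = 2 * k + 1 + 1 by ring, choose_succ_succ,
        choose_symm_half]
      ring
    have h := centralBinom_sq_mul_le (k + 1)
    have h4 : 4 ^ (2 * k + 1) = 16 ^ k * 4 := by rw [pow_succ, pow_mul]; norm_num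
    rw [hcb, pow_succ 16] at h
    rw [show (2 * k + 1) / 2 = k by omega, h4]
    nlinarith

theorem Nat.le_two_pow_totient {m : ℕ} (hm : Odd m) : m ≤ 2 ^ m.totient := by
  by_contra! hlt
  have hmod := Nat.ModEq.pow_totient (Nat.coprime_two_left.mpr hm)
  rw [Nat.ModEq, Nat.mod_eq_of_lt hlt] at hmod
  have h2 : 2 ≤ 2 ^ m.totient :=
    Nat.le_self_pow (Nat.totient_pos.mpr hm.pos).ne' 2
  have h1 : 1 % m ≤ 1 := Nat.mod_le 1 m
  omega

theorem choose_half_div_two_pow_pow_totient_le {N m : ℕ} (hN : 0 < N) (hm : Odd m)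
    (hm1 : 1 < m) :
    ((N.choose (N / 2) : ℝ) / 2 ^ N) ^ m.totient ≤
      min ((2 ^ m.totient : ℝ)⁻¹) (4 / ((N : ℝ) * m)) := by
  set r : ℝ := N.choose (N / 2) / 2 ^ N
  have hr0 : 0 ≤ r := by positivity
  have hr : r ≤ 1 / 2 := by
    obtain ⟨M, rfl⟩ : ∃ M, N = M + 1 := ⟨N - 1, by omega⟩
    have h : ((M + 1).choose ((M + 1) / 2) : ℝ) ≤ 2 ^ M := by
      exact_mod_cast Nat.choose_succ_le_two_pow M _
    rw [div_le_iff₀ (by positivity), pow_succ]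
    linarith
  have hr2 : r ^ 2 * N ≤ 1 := by
    have h : (N.choose (N / 2) : ℝ) ^ 2 * N ≤ 4 ^ N := by
      exact_mod_cast Nat.choose_half_sq_mul_le N
    rw [div_pow, ← pow_mul, mul_comm N 2, pow_mul, div_mul_eq_mul_div, div_le_one (by positivity)]
    norm_num
    exact h
  have hφ : 2 ≤ m.totient := by
    have h2m : 2 < m := by obtain ⟨k, rfl⟩ := hm; omega
    obtain ⟨t, ht⟩ := Nat.totient_even h2m
    have := Nat.totient_pos.mpr (by omega : 0 < m)
    omega
  obtain ⟨e, he⟩ := Nat.exists_eq_add_of_le' hφ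
  have hm2 : (m : ℝ) ≤ 2 ^ (e + 2) := by
    rw [← he]; exact_mod_cast Nat.le_two_pow_totient hm
  refine le_min ?_ ?_
  · calc r ^ m.totient ≤ (1 / 2) ^ m.totient := pow_le_pow_left₀ hr0 hr _
      _ = (2 ^ m.totient)⁻¹ := by rw [one_div, inv_pow]
  · rw [le_div_iff₀ (by positivity), he]
    calc r ^ (e + 2) * (N * m) = (r ^ 2 * N) * (r ^ e * m) := by ring
      _ ≤ 1 * ((1 / 2) ^ e * 2 ^ (e + 2)) := by gcongr
      _ = 4 := by rw [pow_add, one_div, inv_pow]; field_simp; norm_num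

section Counting

open scoped Classical

theorem card_cyclotomic_dvd_ofFn_rowSum_le (m N : ℕ) :
    #{g : Fin m → Fin N → Bool | cyclotomic m ℤ ∣ ofFn m fun t => ∑ i, (g t i).toSign}
      ≤ N.choose (N / 2) ^ m.totient * (2 ^ N) ^ (m - m.totient) := by
  set J : Finset (Fin m) := {t | (t : ℕ) < m.totient}
  have hJ : #J = m.totient := by
    rw [Fin.card_filter_val_lt, min_eq_right (Nat.totient_le m)]
  calc _ ≤ N.choose (N / 2) ^ #J * Fintype.card (Fin N → Bool) ^ #Jᶜ :=
        card_le_pow_mul_pow_of_determined J (fun s : Fin N → Bool => ∑ i, (s i).toSign)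
          (card_sum_toSign_eq_le N) fun g hg g' hg' hcompl t _ => ?_
    _ = _ := by
        rw [card_compl, hJ, Fintype.card_fin, Fintype.card_fun, Fintype.card_bool,
          Fintype.card_fin]
  rw [mem_filter] at hg hg'
  refine congrFun (injective_ofFn m (eq_of_cyclotomic_dvd_of_coeff_eq hg.2 hg'.2 fun i hi => ?_)) t
  by_cases him : i < m
  · simp [him, hcompl ⟨i, him⟩ (by simpa [J] using hi)]
  · simp [ofFn_coeff_eq_zero_of_ge _ (not_lt.mp him)]

theorem card_cyclotomic_dvd_signPoly_le (N m : ℕ) :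
    #{b : Fin (N * m) → Bool | cyclotomic m ℤ ∣ signPoly b}
      ≤ N.choose (N / 2) ^ m.totient * (2 ^ N) ^ (m - m.totient) := by
  refine (card_le_card_of_injOn (fun b t i => b (finProdFinEquiv (i, t))) (fun b hb => ?_)
    fun b _ b' _ hbb' => ?_).trans (card_cyclotomic_dvd_ofFn_rowSum_le m N)
  · simp only [coe_filter, mem_univ, true_and, Set.mem_ofPred_eq] at hb ⊢
    refine (dvd_sub_right hb).mp ((cyclotomic.dvd_X_pow_sub_one m ℤ).trans ?_)
    exact X_pow_sub_one_dvd_ofFn_sub_ofFn_sum _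
  · funext j
    obtain ⟨⟨i, t⟩, rfl⟩ := finProdFinEquiv.surjective j
    exact congrFun (congrFun hbb' t) i

theorem card_cyclotomic_dvd_signPoly_div_le {n m : ℕ} (hn : Odd n) (hmn : m ∣ n) (hm : 1 < m) :
    (#{b : Fin n → Bool | cyclotomic m ℤ ∣ signPoly b} : ℝ) / 2 ^ n
      ≤ min ((2 ^ m.totient : ℝ)⁻¹) (4 / n) := by
  obtain ⟨N, rfl⟩ : ∃ N, n = N * m := ⟨n / m, (Nat.div_mul_cancel hmn).symm⟩
  have hN : 0 < N := Nat.pos_of_ne_zero fun hN => by simp [hN] at hn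
  have hcard : (#{b : Fin (N * m) → Bool | cyclotomic m ℤ ∣ signPoly b} : ℝ)
      ≤ N.choose (N / 2) ^ m.totient * ((2 : ℝ) ^ N) ^ (m - m.totient) := by
    exact_mod_cast card_cyclotomic_dvd_signPoly_le N m
  have hsplit : (2 : ℝ) ^ (N * m) = (2 ^ N) ^ m.totient * (2 ^ N) ^ (m - m.totient) := by
    rw [← pow_add, Nat.add_sub_cancel' (Nat.totient_le m), pow_mul]
  calc _ ≤ (N.choose (N / 2) ^ m.totient * ((2 : ℝ) ^ N) ^ (m - m.totient))
        / ((2 ^ N) ^ m.totient * (2 ^ N) ^ (m - m.totient)) := by rw [hsplit]; gcongr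
    _ = ((N.choose (N / 2) : ℝ) / 2 ^ N) ^ m.totient := by
        rw [mul_div_mul_right _ _ (by positivity), div_pow]
    _ ≤ _ := by
        push_cast
        exact choose_half_div_two_pow_pow_totient_le hN (hn.of_dvd_nat hmn) hm

end Counting

section Rademacher

variable {Ω : Type*} [MeasurableSpace Ω] {P : Measure Ω}

theorem ae_eq_one_or_eq_neg_one [IsProbabilityMeasure P] {Y : Ω → ℝ} (hY : Measurable Y)
    (h : P {ω | Y ω = 1} = 1 / 2 ∧ P {ω | Y ω = -1} = 1 / 2) :
    ∀ᵐ ω ∂P, Y ω = 1 ∨ Y ω = -1 := by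
  have hdisj : Disjoint {ω | Y ω = 1} {ω | Y ω = -1} :=
    Set.disjoint_left.mpr fun ω (h₁ : Y ω = 1) (h₂ : Y ω = -1) => by norm_num [h₁] at h₂
  have hmeas : MeasurableSet {ω | Y ω = 1 ∨ Y ω = -1} :=
    (hY (measurableSet_singleton 1)).union (hY (measurableSet_singleton (-1)))
  rw [ae_iff, ← Set.compl_ofPred, prob_compl_eq_zero_iff hmeas, Set.ofPred_or,
    measure_union hdisj (hY (measurableSet_singleton (-1))), h.1, h.2, ENNReal.add_halves]

variable {n : ℕ} {X : Fin n → Ω → ℝ}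

theorem measure_forall_eq_toSign (hind : iIndepFun X P)
    (hhalf : ∀ j, P {ω | X j ω = 1} = 1 / 2 ∧ P {ω | X j ω = -1} = 1 / 2) (b : Fin n → Bool) :
    P {ω | ∀ j, X j ω = (b j).toSign} = 2⁻¹ ^ n := by
  have h := hind.measure_inter_preimage_eq_mul univ (sets := fun j => {((b j).toSign : ℝ)})
    fun _ _ => measurableSet_singleton _
  have hj : ∀ j, P (X j ⁻¹' {((b j).toSign : ℝ)}) = 2⁻¹ := fun j => by
    cases b j <;> simp [Bool.toSign, Set.preimage, ← one_div, hhalf j]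
  have hset : {ω | ∀ j, X j ω = (b j).toSign} = ⋂ j, X j ⁻¹' {((b j).toSign : ℝ)} := by
    ext; simp
  simpa [hset, hj] using h

theorem toReal_measure_le_card_div [IsProbabilityMeasure P] (hX : ∀ j, Measurable (X j))
    (hind : iIndepFun X P)
    (hhalf : ∀ j, P {ω | X j ω = 1} = 1 / 2 ∧ P {ω | X j ω = -1} = 1 / 2)
    (p : (Fin n → ℝ) → Prop) [DecidablePred p] :
    (P {ω | p fun j => X j ω}).toReal ≤ #{b : Fin n → Bool | p fun j => (b j).toSign} / 2 ^ n := by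
  set S : Finset (Fin n → Bool) := {b | p fun j => (b j).toSign}
  have hle : P {ω | p fun j => X j ω} ≤ ∑ b ∈ S, P {ω | ∀ j, X j ω = (b j).toSign} := by
    refine (measure_mono_ae ?_).trans (measure_biUnion_finset_le S _)
    filter_upwards [ae_all_iff.mpr fun j => ae_eq_one_or_eq_neg_one (hX j) (hhalf j)]
      with ω hω (hp : p fun j => X j ω)
    have hb : (fun j => X j ω) = fun j => ((decide (X j ω = 1)).toSign : ℝ) := by
      funext j
      rcases hω j with h | h <;> norm_num [h, Bool.toSign]
    exact Set.mem_biUnion (by simpa [S, ← hb] using hp) fun j => congrFun hb j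
  simp only [measure_forall_eq_toSign hind hhalf, sum_const, nsmul_eq_mul] at hle
  calc (P {ω | p fun j => X j ω}).toReal ≤ (#S * 2⁻¹ ^ n : ℝ≥0∞).toReal :=
        ENNReal.toReal_mono (by finiteness) hle
    _ = #S / 2 ^ n := by simp [div_eq_mul_inv]

end Rademacher

theorem circulant_sign_matrix_singularity_odd
    : ∃ c₃ : ℝ, 0 < c₃ ∧
      ∀ (n : ℕ), Odd n → 3 ≤ n →
      ∀ (Ω : Type) [MeasurableSpace Ω] (P : Measure Ω), IsProbabilityMeasure P →
      ∀ X : Fin n → Ω → ℝ, (∀ j, Measurable (X j)) →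
        iIndepFun X P →
        (∀ j, P {ω | X j ω = 1} = 1 / 2 ∧ P {ω | X j ω = -1} = 1 / 2) →
        (P {ω | (Matrix.of fun i j : Fin n => X (j - i) ω).det = 0}).toReal ≤
          min (c₃ * (n.divisors.card : ℝ) / n)
            (∑ m ∈ n.divisors.filter (fun m => 1 < m), ((2 : ℝ) ^ m.totient)⁻¹) := by
  refine ⟨4, by norm_num, fun n hn _ Ω _ P _ X hX hind hhalf => ?_⟩
  classical
  set D := n.divisors.filter (fun m => 1 < m)
  have hsingular :
      ({b | (Matrix.of fun i j => ((b (j - i)).toSign : ℝ)).det = 0} : Finset (Fin n → Bool))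
        ⊆ D.biUnion fun m => {b | cyclotomic m ℤ ∣ signPoly b} := fun b hb => by
    obtain ⟨m, hmn, hm, hdvd⟩ :=
      exists_cyclotomic_dvd_signPoly_of_det_eq_zero hn (mem_filter.mp hb).2
    exact mem_biUnion.mpr ⟨m, mem_filter.mpr ⟨hmn, hm⟩, mem_filter.mpr ⟨mem_univ _, hdvd⟩⟩
  have hterm : ∀ m ∈ D, (#{b : Fin n → Bool | cyclotomic m ℤ ∣ signPoly b} : ℝ) / 2 ^ n
      ≤ min ((2 ^ m.totient : ℝ)⁻¹) (4 / n) := fun m hm =>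
    card_cyclotomic_dvd_signPoly_div_le hn (Nat.dvd_of_mem_divisors (mem_filter.mp hm).1)
      (mem_filter.mp hm).2
  calc _ ≤ (#{b : Fin n → Bool | (Matrix.of fun i j => ((b (j - i)).toSign : ℝ)).det = 0} : ℝ)
        / 2 ^ n :=
        toReal_measure_le_card_div hX hind hhalf fun x => (Matrix.of fun i j => x (j - i)).det = 0
    _ ≤ ∑ m ∈ D, (#{b : Fin n → Bool | cyclotomic m ℤ ∣ signPoly b} : ℝ) / 2 ^ n := by
        rw [← sum_div]
        gcongr
        exact_mod_cast (card_le_card hsingular).trans card_biUnion_le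
    _ ≤ _ := le_min ?_ (sum_le_sum fun m hm => (hterm m hm).trans (min_le_left _ _))
  calc _ ≤ ∑ _m ∈ D, 4 / (n : ℝ) := sum_le_sum fun m hm => (hterm m hm).trans (min_le_right _ _)
    _ = 4 * #D / n := by rw [sum_const, nsmul_eq_mul]; ring
    _ ≤ 4 * (n.divisors.card : ℝ) / n := by gcongr; exact filter_subset _ _
end
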